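/- arXiv:2605.19853 — 2 statements merged into one kernel-verified Lean document; each statement's English description precedes it below -/
import Mathlib

section
/- Let (G, k) be an instance of l-ECOC and (I, J, R) an ECOC crown decomposition of G. Then G has an l-ECOC solution of size at most k if and only if G − (I ∪ J) has an l-ECOC solution of size at most k − |J|. -/
open SimpleGraph

variable {V : Type*}

/-- Every connected component of `G.induce X` has exactly `l` vertices. -/
def AllCompsSize (G : SimpleGraph V) (X : Set V) (l : ℕ) : Prop :=
  ∀ c : (G.induce X).ConnectedComponent, Nat.card c.supp = l

/-- `S` is an `l`-ECOC solution: every component of `G - S` has exactly `l` vertices. -/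
def IsECOCSol (G : SimpleGraph V) (l : ℕ) (S : Set V) : Prop :=
  AllCompsSize G Sᶜ l

/-- The (open) neighborhood of a set `X`. -/
def nbhd (G : SimpleGraph V) (X : Set V) : Set V :=
  {v | v ∉ X ∧ ∃ u ∈ X, G.Adj u v}

/-- ECOC crown decomposition. -/
def IsECOCCrown (G : SimpleGraph V) (l : ℕ) (I J R : Set V) : Prop :=
  (I ∪ J ∪ R = Set.univ) ∧ Disjoint I J ∧ Disjoint I R ∧ Disjoint J R ∧
  AllCompsSize G I l ∧
  (∀ u ∈ I, ∀ v ∈ R, ¬ G.Adj u v) ∧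
  ∃ M : J → (G.induce I).ConnectedComponent, Function.Injective M ∧
    ∀ x : J, ∃ u ∈ (M x).supp, G.Adj (u : V) (x : V)

/-- Strict ECOC crown decomposition. -/
def IsStrictECOCCrown (G : SimpleGraph V) (l : ℕ) (I J R : Set V) : Prop :=
  IsECOCCrown G l I J R ∧ I.Nonempty ∧
  Nat.card J + 1 ≤ Nat.card ((G.induce I).ConnectedComponent)

/-- `u` and `v` lie in `X` and in the same connected component of `G.induce X`. -/
def ReachIn (G : SimpleGraph V) (X : Set V) (u v : V) : Prop :=
  ∃ (hu : u ∈ X) (hv : v ∈ X), (G.induce X).Reachable ⟨u, hu⟩ ⟨v, hv⟩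

/-- Feasibility for the LP relaxation WECOC-LP. -/
def LPFeasible (G : SimpleGraph V) (l : ℕ) (x : V → ℝ) : Prop :=
  (∀ v, 0 ≤ x v ∧ x v ≤ 1) ∧
  ∀ C : Finset V, (G.induce (C : Set V)).Connected → C.card = l + 1 →
    1 ≤ ∑ v ∈ C, x v

/-- Alternating path w.r.t. a subgraph `M`: a path whose edges at even positions
are outside `M` and at odd positions are inside `M`. -/
def AltPath (G : SimpleGraph V) (M : G.Subgraph) {u v : V} (p : G.Walk u v) : Prop :=
  p.IsPath ∧ ∀ i : Fin p.edges.length, (p.edges.get i ∈ M.edgeSet ↔ Odd i.val)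


/-!
Given a solution `S`, enlarge it to `U`, the union of `S` and of every component of `G - S`
meeting `I ∪ J`. Removing whole components keeps a solution, and `U ⊇ I ∪ J`. The added
components are at most as many as the components of `G[I]`: one containing some `x ∈ J` is
charged to the matched component `M x`, and one avoiding `J` cannot leave `I` (there are no
`I`–`R` edges), so it is itself a component of `G[I]`. Hence `|U| ≤ |S| + |I|`, and
`U \ (I ∪ J)` solves `G - (I ∪ J)` with at most `|S| - |J|` vertices. Conversely, for a solution
`S'` of `G - (I ∪ J)`, the graph `G - (J ∪ S')` is `G[I]` beside `G - (I ∪ J) - S'`, with no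
edges in between, so `J ∪ S'` solves `G`.
-/

namespace ReachIn

variable {G : SimpleGraph V} {X A : Set V} {u v w : V}

theorem refl (hv : v ∈ X) : ReachIn G X v v := ⟨hv, hv, .rfl⟩

theorem symm : ReachIn G X u v → ReachIn G X v u
  | ⟨hu, hv, h⟩ => ⟨hv, hu, h.symm⟩

theorem trans : ReachIn G X u v → ReachIn G X v w → ReachIn G X u w
  | ⟨hu, _, h⟩, ⟨_, hw, h'⟩ => ⟨hu, hw, h.trans h'⟩

theorem of_adj (hu : u ∈ X) (hv : v ∈ X) (h : G.Adj u v) : ReachIn G X u v :=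
  ⟨hu, hv, Adj.reachable (by simpa using h)⟩

theorem mono (hAX : A ⊆ X) : ReachIn G A u v → ReachIn G X u v
  | ⟨hu, hv, h⟩ => ⟨hAX hu, hAX hv, h.map (G.induceHomOfLE hAX).toHom⟩

theorem of_closed (hA : ∀ a ∈ A, ∀ b ∈ X, G.Adj a b → b ∈ A) (hv : v ∈ A)
    (h : ReachIn G X u v) : ReachIn G A u v := by
  obtain ⟨_, _, ⟨p⟩⟩ := h.symm
  suffices key : ∀ (x y : X), (G.induce X).Walk x y → x.1 ∈ A → ReachIn G A y x by
    exact key _ _ p hv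
  intro x y q
  induction q with
  | nil => exact refl
  | cons hadj _ ih =>
    intro hx
    have hy := hA _ hx _ (Subtype.prop _) hadj
    exact (ih hy).trans (of_adj hy hx hadj.symm)

end ReachIn

section AllCompsSize

variable {G : SimpleGraph V} {X A B : Set V} {l : ℕ}

theorem image_val_supp_connectedComponentMk {v : V} (hv : v ∈ X) :
    Subtype.val '' ((G.induce X).connectedComponentMk ⟨v, hv⟩).supp =
      {u | ReachIn G X u v} := by
  ext u
  simp only [Set.mem_image, ConnectedComponent.mem_supp_iff, ConnectedComponent.eq,
    Subtype.exists, exists_and_right, exists_eq_right, ReachIn, Set.mem_ofPred_eq]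
  exact ⟨fun ⟨hu, h⟩ => ⟨hu, hv, h⟩, fun ⟨hu, _, h⟩ => ⟨hu, h⟩⟩

theorem allCompsSize_iff :
    AllCompsSize G X l ↔ ∀ v ∈ X, Nat.card {u | ReachIn G X u v} = l := by
  have hcard (v : V) (hv : v ∈ X) : Nat.card ((G.induce X).connectedComponentMk ⟨v, hv⟩).supp =
      Nat.card {u | ReachIn G X u v} := by
    rw [← image_val_supp_connectedComponentMk, Nat.card_image_of_injective Subtype.val_injective]
  refine ⟨fun h v hv => hcard v hv ▸ h _, fun h c => ?_⟩
  induction c using ConnectedComponent.ind with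
  | h w => exact (hcard w w.2).trans (h w w.2)

theorem setOf_reachIn_eq_of_closed (hAX : A ⊆ X) (hA : ∀ a ∈ A, ∀ b ∈ X, G.Adj a b → b ∈ A)
    {v : V} (hv : v ∈ A) : {u | ReachIn G X u v} = {u | ReachIn G A u v} :=
  Set.ext fun _ => ⟨ReachIn.of_closed hA hv, ReachIn.mono hAX⟩

theorem AllCompsSize.of_closed (h : AllCompsSize G X l) (hAX : A ⊆ X)
    (hA : ∀ a ∈ A, ∀ b ∈ X, G.Adj a b → b ∈ A) : AllCompsSize G A l := by
  rw [allCompsSize_iff] at h ⊢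
  intro v hv
  rw [← setOf_reachIn_eq_of_closed hAX hA hv]
  exact h v (hAX hv)

theorem AllCompsSize.union (hA : AllCompsSize G A l) (hB : AllCompsSize G B l)
    (hAB : ∀ a ∈ A, ∀ b ∈ B, ¬ G.Adj a b) : AllCompsSize G (A ∪ B) l := by
  rw [allCompsSize_iff] at hA hB ⊢
  rintro v (hv | hv)
  · rw [setOf_reachIn_eq_of_closed Set.subset_union_left _ hv]
    · exact hA v hv
    · rintro a ha b (hb | hb) hab
      exacts [hb, absurd hab (hAB a ha b hb)]
  · rw [setOf_reachIn_eq_of_closed Set.subset_union_right _ hv]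
    · exact hB v hv
    · rintro b hb a (ha | ha) hba
      exacts [absurd hba.symm (hAB a ha b hb), ha]

theorem AllCompsSize.sdiff_components (h : AllCompsSize G X l)
    (C : Set (G.induce X).ConnectedComponent) :
    AllCompsSize G (X \ Subtype.val '' ((G.induce X).connectedComponentMk ⁻¹' C)) l := by
  refine h.of_closed Set.sdiff_subset ?_
  rintro a ⟨haX, haC⟩ b hbX hab
  refine ⟨hbX, fun ⟨w, hw, hwb⟩ => haC ⟨⟨a, haX⟩, ?_, rfl⟩⟩
  subst hwb
  have : (G.induce X).Adj ⟨a, haX⟩ w := hab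
  rwa [Set.mem_preimage, ConnectedComponent.eq.mpr this.reachable]

theorem allCompsSize_induce_iff {Y : Set V} {Z : Set Y} :
    AllCompsSize (G.induce Y) Z l ↔ AllCompsSize G (Subtype.val '' Z) l := by
  let e : (G.induce Y).induce Z ≃g G.induce (Subtype.val '' Z) :=
    { toEquiv := Equiv.Set.image Subtype.val Z Subtype.val_injective
      map_rel_iff' := by simp [Equiv.Set.image, Equiv.Set.imageOfInjOn] }
  refine ⟨fun h c => ?_, fun h c => ?_⟩
  · have := h (e.connectedComponentEquiv.symm c)
    rwa [Nat.card_congr (ConnectedComponent.isoEquivSupp e _), Equiv.apply_symm_apply] at this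
  · rw [Nat.card_congr (ConnectedComponent.isoEquivSupp e c)]
    exact h _

theorem isECOCSol_induce_iff {Y : Set V} {S : Set Y} :
    IsECOCSol (G.induce Y) l S ↔ AllCompsSize G (Y \ Subtype.val '' S) l := by
  rw [IsECOCSol, allCompsSize_induce_iff, Set.image_val_compl]

end AllCompsSize

theorem SimpleGraph.ConnectedComponent.card_preimage_mk {W : Type*} [Finite W]
    {H : SimpleGraph W} {l : ℕ} (h : ∀ c : H.ConnectedComponent, Nat.card c.supp = l)
    (C : Set H.ConnectedComponent) :
    Nat.card (H.connectedComponentMk ⁻¹' C) = l * Nat.card C := by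
  have := Fintype.ofFinite C
  change Nat.card {x // H.connectedComponentMk x ∈ C} = _
  rw [← Nat.card_congr (Equiv.sigmaSubtypeFiberEquivSubtype H.connectedComponentMk
    (q := (· ∈ C)) (fun _ => Iff.rfl)), Nat.card_sigma]
  calc ∑ c : C, Nat.card {x // H.connectedComponentMk x = c} = ∑ _c : C, l :=
        Finset.sum_congr rfl fun c _ => h c
    _ = l * Nat.card C := by simp [mul_comm]

theorem SimpleGraph.card_eq_mul_card_connectedComponent {W : Type*} [Finite W]
    {H : SimpleGraph W} {l : ℕ} (h : ∀ c : H.ConnectedComponent, Nat.card c.supp = l) :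
    Nat.card W = l * Nat.card H.ConnectedComponent := by
  simpa using ConnectedComponent.card_preimage_mk h Set.univ

namespace IsECOCCrown

variable {G : SimpleGraph V} {l : ℕ} {I J R S : Set V}

theorem eq_compl (h : IsECOCCrown G l I J R) : R = (I ∪ J)ᶜ := by
  obtain ⟨hcover, -, hIR, hJR, -⟩ := h
  exact (IsCompl.of_eq (Set.disjoint_union_left.2 ⟨hIR, hJR⟩).eq_bot hcover).compl_eq.symm

theorem isECOCSol_union (h : IsECOCCrown G l I J R) {T : Set V} (hTR : T ⊆ R)
    (hT : AllCompsSize G (R \ T) l) : IsECOCSol G l (J ∪ T) := by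
  have hR := h.eq_compl
  obtain ⟨-, hIJ, -, -, hI, hIR, -⟩ := h
  have hcompl : (J ∪ T)ᶜ = I ∪ (R \ T) := by
    ext v
    have hvT := @hTR v
    have hvIJ := @Set.disjoint_left.1 hIJ v
    simp only [hR, Set.mem_compl_iff, Set.mem_union, Set.mem_sdiff] at hvT ⊢
    tauto
  rw [IsECOCSol, hcompl]
  exact hI.union hT fun a ha b hb => hIR a ha b hb.1

theorem reachIn_compl_of_reachIn [Finite V] (h : IsECOCCrown G l I J R) (hS : IsECOCSol G l S)
    {u v : V} (hvI : v ∈ I) (hvS : v ∉ S) (hvJ : ∀ x ∈ J, ¬ ReachIn G Sᶜ x v)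
    (huv : ReachIn G I u v) : ReachIn G Sᶜ u v := by
  obtain ⟨hcover, -, -, -, hI, hIR, -⟩ := h
  have hsub : {u | ReachIn G Sᶜ u v} ⊆ {u | ReachIn G I u v} := by
    intro u hu
    refine (ReachIn.of_closed (A := {w | w ∈ I ∧ ReachIn G Sᶜ w v}) ?_
      ⟨hvI, .refl hvS⟩ hu).mono fun w hw => hw.1
    rintro a ⟨haI, hav⟩ b hbS hab
    have hbv : ReachIn G Sᶜ b v := (ReachIn.of_adj hbS hav.1 hab.symm).trans hav
    have hb : b ∈ I ∪ J ∪ R := hcover ▸ Set.mem_univ b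
    rcases hb with (hbI | hbJ) | hbR
    exacts [⟨hbI, hbv⟩, absurd hbv (hvJ b hbJ), absurd hab (hIR a haI b hbR)]
  have hcard : Nat.card {u | ReachIn G I u v} = Nat.card {u | ReachIn G Sᶜ u v} := by
    rw [allCompsSize_iff.1 hI v hvI, allCompsSize_iff.1 hS v hvS]
  rw [Nat.card_coe_set_eq, Nat.card_coe_set_eq] at hcard
  exact (Set.ext_iff.1 (Set.eq_of_subset_of_ncard_le hsub hcard.le) u).2 huv

theorem not_adj_of_reachIn [Finite V] (h : IsECOCCrown G l I J R) (hS : IsECOCSol G l S)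
    {v w x : V} (hvI : v ∈ I) (hvS : v ∉ S) (hvJ : ∀ x ∈ J, ¬ ReachIn G Sᶜ x v)
    (hwv : ReachIn G I w v) (hxJ : x ∈ J) (hxS : x ∉ S) : ¬ G.Adj w x := fun hwx =>
  have hwv' := h.reachIn_compl_of_reachIn hS hvI hvS hvJ hwv
  hvJ x hxJ ((ReachIn.of_adj hxS hwv'.1 hwx.symm).trans hwv')

theorem card_components_meeting_le [Finite V] (h : IsECOCCrown G l I J R)
    (hS : IsECOCSol G l S) :
    Nat.card {c : (G.induce Sᶜ).ConnectedComponent | ∃ w ∈ c.supp, w.1 ∈ I ∪ J} ≤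
      Nat.card (G.induce I).ConnectedComponent := by
  obtain ⟨M, hMinj, hMadj⟩ := h.2.2.2.2.2.2
  set κ := (G.induce Sᶜ).connectedComponentMk
  set κI := (G.induce I).connectedComponentMk
  let Inside (c) (K) : Prop := ∃ (u : V) (huI : u ∈ I) (huS : u ∉ S),
    K = κI ⟨u, huI⟩ ∧ c = κ ⟨u, huS⟩ ∧ ∀ x ∈ J, ¬ ReachIn G Sᶜ x u
  let Matched (c) (K) : Prop := ∃ (x : J) (hxS : x.1 ∉ S), M x = K ∧ c = κ ⟨x, hxS⟩
  have hex (c : {c : (G.induce Sᶜ).ConnectedComponent | ∃ w ∈ c.supp, w.1 ∈ I ∪ J}) :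
      ∃ K, Inside c K ∨ Matched c K := by
    obtain ⟨c, w, hw, hwIJ⟩ := c
    by_cases hJ : ∃ (x : J) (hxS : x.1 ∉ S), c = κ ⟨x, hxS⟩
    · obtain ⟨x, hxS, rfl⟩ := hJ
      exact ⟨M x, .inr ⟨x, hxS, rfl, rfl⟩⟩
    · have hwI : w.1 ∈ I := hwIJ.resolve_right fun hwJ => hJ ⟨⟨w, hwJ⟩, w.2, hw.symm⟩
      refine ⟨κI ⟨w, hwI⟩, .inl ⟨w, hwI, w.2, rfl, hw.symm, fun x hxJ ⟨hxS, _, hxw⟩ => ?_⟩⟩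
      exact hJ ⟨⟨x, hxJ⟩, hxS, hw.symm.trans (ConnectedComponent.eq.2 hxw).symm⟩
  have hInsideMatched (c c' K) : Inside c K → Matched c' K → False := by
    rintro ⟨u, huI, huS, rfl, -, huJ⟩ ⟨x, hxS, hxK, -⟩
    obtain ⟨w, hw, hwx⟩ := hMadj x
    exact h.not_adj_of_reachIn hS huI huS huJ ⟨w.2, huI, ConnectedComponent.eq.1 (hw.trans hxK)⟩
      x.2 hxS hwx
  have huniq (c c' K) : (Inside c K ∨ Matched c K) → (Inside c' K ∨ Matched c' K) → c = c' := by
    rintro (hc | hc) (hc' | hc')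
    · obtain ⟨u, huI, huS, rfl, rfl, huJ⟩ := hc
      obtain ⟨u', hu'I, hu'S, hK, rfl, -⟩ := hc'
      have := h.reachIn_compl_of_reachIn hS huI huS huJ
        ⟨hu'I, huI, ConnectedComponent.eq.1 hK.symm⟩
      exact (ConnectedComponent.eq.2 this.2.2).symm
    · exact (hInsideMatched _ _ _ hc hc').elim
    · exact (hInsideMatched _ _ _ hc' hc).elim
    · obtain ⟨x, hxS, rfl, rfl⟩ := hc
      obtain ⟨x', hx'S, hK, rfl⟩ := hc'
      obtain rfl := hMinj hK
      rfl
  choose f hf using hex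
  exact Nat.card_le_card_of_injective f fun c c' hcc =>
    Subtype.ext (huniq _ _ _ (hf c) (hcc ▸ hf c'))

theorem exists_superset_card_le [Finite V] (h : IsECOCCrown G l I J R)
    (hS : IsECOCSol G l S) : ∃ U, IsECOCSol G l U ∧ I ∪ J ⊆ U ∧ U.ncard ≤ S.ncard + I.ncard := by
  have hI : AllCompsSize G I l := h.2.2.2.2.1
  set C := {c : (G.induce Sᶜ).ConnectedComponent | ∃ w ∈ c.supp, w.1 ∈ I ∪ J}
  set W := Subtype.val '' ((G.induce Sᶜ).connectedComponentMk ⁻¹' C)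
  refine ⟨S ∪ W, ?_, fun v hv => ?_, ?_⟩
  · rw [IsECOCSol, Set.compl_union, ← Set.sdiff_eq]
    exact AllCompsSize.sdiff_components hS C
  · by_cases hvS : v ∈ S
    · exact .inl hvS
    · exact .inr ⟨⟨v, hvS⟩, ⟨⟨v, hvS⟩, rfl, hv⟩, rfl⟩
  · have hW : W.ncard ≤ I.ncard := by
      rw [← Nat.card_coe_set_eq, ← Nat.card_coe_set_eq,
        Nat.card_image_of_injective Subtype.val_injective,
        ConnectedComponent.card_preimage_mk hS, card_eq_mul_card_connectedComponent hI]
      exact Nat.mul_le_mul_left l (h.card_components_meeting_le hS)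
    exact (Set.ncard_union_le S W).trans (by omega)

theorem exists_restrict_sol [Finite V] (h : IsECOCCrown G l I J R) (hS : IsECOCSol G l S) :
    ∃ T ⊆ R, AllCompsSize G (R \ T) l ∧ T.ncard + J.ncard ≤ S.ncard := by
  obtain ⟨U, hU, hIJU, hUcard⟩ := h.exists_superset_card_le hS
  have hR := h.eq_compl
  have hIJ : Disjoint I J := h.2.1
  refine ⟨U \ (I ∪ J), hR ▸ fun v hv => hv.2, ?_, ?_⟩
  · have hcompl : R \ (U \ (I ∪ J)) = Uᶜ := by
      ext v
      have := @hIJU v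
      simp only [hR, Set.mem_sdiff, Set.mem_compl_iff] at this ⊢
      tauto
    rwa [hcompl]
  · have hle := Set.ncard_le_ncard hIJU
    rw [Set.ncard_union_eq hIJ] at hle
    rw [Set.ncard_sdiff hIJU, Set.ncard_union_eq hIJ]
    omega

end IsECOCCrown

theorem stmt1_general [Fintype V] (G : SimpleGraph V) (l k : ℕ)
    (I J R : Set V) (hcrown : IsECOCCrown G l I J R) :
    (∃ S : Set V, IsECOCSol G l S ∧ Nat.card S ≤ k) ↔
      (∃ S' : Set ((I ∪ J)ᶜ : Set V),
        IsECOCSol (G.induce ((I ∪ J)ᶜ : Set V)) l S' ∧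
        Nat.card S' + Nat.card J ≤ k) := by
  obtain rfl := hcrown.eq_compl
  constructor
  · rintro ⟨S, hS, hSk⟩
    obtain ⟨T, hTR, hT, hcard⟩ := hcrown.exists_restrict_sol hS
    refine ⟨Subtype.val ⁻¹' T, ?_, ?_⟩
    · rwa [isECOCSol_induce_iff, Subtype.image_preimage_coe, Set.inter_eq_right.2 hTR]
    · rw [← Nat.card_image_of_injective Subtype.val_injective, Subtype.image_preimage_coe,
        Set.inter_eq_right.2 hTR]
      simp only [Nat.card_coe_set_eq] at hSk ⊢
      omega
  · rintro ⟨S', hS', hk⟩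
    refine ⟨J ∪ Subtype.val '' S', hcrown.isECOCSol_union (Subtype.coe_image_subset _ _)
      (isECOCSol_induce_iff.1 hS'), ?_⟩
    simp only [Nat.card_coe_set_eq] at hk ⊢
    have := Set.ncard_union_le J (Subtype.val '' S')
    rw [Set.ncard_image_of_injective _ Subtype.val_injective] at this
    omega

theorem stmt1 [Fintype V] (G : SimpleGraph V) (l k : ℕ) (hl : 1 ≤ l)
    (I J R : Set V) (hcrown : IsECOCCrown G l I J R) :
    (∃ S : Set V, IsECOCSol G l S ∧ Nat.card S ≤ k) ↔
      (∃ S' : Set ((I ∪ J)ᶜ : Set V),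
        IsECOCSol (G.induce ((I ∪ J)ᶜ : Set V)) l S' ∧
        Nat.card S' + Nat.card J ≤ k) :=
  stmt1_general G l k I J R hcrown
end

section
/- Let G be a graph with n vertices such that every component of G has more than l vertices, and suppose G has an l-ECOC solution of size at most k where n ≥ (l+1)k + l. Then among all strict ECOC crown decompositions of G there exists a minimal one: a strict ECOC crown decomposition (I,J,R) such that no proper subsets I' ⊊ I, J' ⊆ J yield another strict ECOC crown decomposition. -/
open SimpleGraph

variable {V : Type*}

/-!
A solution `S` with `|S| ≤ k` leaves at least `k + 1` components of size `l` in `G - S`, so these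
components outnumber `S`. Call a component confined to `J ⊆ S` if its neighbours in `S` lie in `J`.
For an inclusion-minimal `J` whose confined components outnumber it, Hall's condition holds from
`J` to those components: removing a violating set from `J` would keep the surplus. The matching
then makes the union of the confined components the crown `I` with head `J`. Finally, strict
crowns with `⊆`-minimal `I` exist since `Set V` is well-founded for finite `V`.
-/

open Function

section SurplusMatching

variable {α β : Type*} (r : β → α → Prop)

def confinedTo (J : Set α) : Set β := {b | ∀ a, r b a → a ∈ J}

variable {r}

lemma confinedTo_diff_subset (J A : Set α) :
    confinedTo r J \ {b | ∃ a ∈ A, r b a} ⊆ confinedTo r (J \ A) :=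
  fun _ ⟨hbJ, hbA⟩ a hab => ⟨hbJ a hab, fun haA => hbA ⟨a, haA, hab⟩⟩

lemma ncard_le_ncard_confinedTo_inter_of_minimal [Finite α] [Finite β] {J : Set α}
    (hJ : Minimal (fun J => J.ncard < (confinedTo r J).ncard) J) {A : Set α} (hAJ : A ⊆ J) :
    A.ncard ≤ (confinedTo r J ∩ {b | ∃ a ∈ A, r b a}).ncard := by
  by_contra! hA
  set N := {b | ∃ a ∈ A, r b a}
  have hAne : A.Nonempty := Set.nonempty_of_ncard_ne_zero (by omega)
  have hJA : J.ncard - A.ncard < (confinedTo r J).ncard - (confinedTo r J ∩ N).ncard := by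
    have := Set.ncard_le_ncard hAJ
    have := hJ.prop
    omega
  refine hJ.not_prop_of_lt (hAJ.sdiff_ssubset_of_nonempty hAne) ?_
  calc (J \ A).ncard = J.ncard - A.ncard := Set.ncard_sdiff hAJ
    _ < (confinedTo r J).ncard - (confinedTo r J ∩ N).ncard := hJA
    _ = (confinedTo r J \ N).ncard := by
      rw [← Set.ncard_sdiff Set.inter_subset_left, Set.sdiff_self_inter]
    _ ≤ (confinedTo r (J \ A)).ncard := Set.ncard_le_ncard (confinedTo_diff_subset J A)

theorem exists_surplus_matching [Finite α] [Finite β] {S : Set α}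
    (hS : S.ncard < (confinedTo r S).ncard) :
    ∃ J ⊆ S, J.ncard < (confinedTo r J).ncard ∧
      ∃ f : J → confinedTo r J, Injective f ∧ ∀ x, r (f x) x := by
  classical
  obtain ⟨J, hJS, hJ⟩ :=
    exists_minimal_le_of_wellFoundedLT (fun J : Set α => J.ncard < (confinedTo r J).ncard) S hS
  refine ⟨J, hJS, hJ.prop, ?_⟩
  have := Fintype.ofFinite J
  have := Fintype.ofFinite (confinedTo r J)
  refine (Fintype.all_card_le_filter_rel_iff_exists_injective
    (fun (a : J) (b : confinedTo r J) => r b a)).mp fun A => ?_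
  have hall := ncard_le_ncard_confinedTo_inter_of_minimal hJ (A := Subtype.val '' (A : Set J))
    (by simp)
  convert hall using 1
  · rw [Set.ncard_image_of_injective _ Subtype.val_injective, Set.ncard_coe_finset]
  · rw [← Set.ncard_coe_finset, ← Set.ncard_image_of_injective _ Subtype.val_injective]
    congr 1
    ext b
    simp [and_comm]

end SurplusMatching

section ClosedSubset

variable {G : SimpleGraph V} {I Y : Set V}

lemma reachable_induce_of_closed (hcl : ∀ u ∈ I, ∀ v ∈ Y, G.Adj u v → v ∈ I) {u v : Y}
    (h : (G.induce Y).Reachable u v) (hu : ↑u ∈ I) :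
    ∃ hv : ↑v ∈ I, (G.induce I).Reachable ⟨u, hu⟩ ⟨v, hv⟩ := by
  obtain ⟨p⟩ := h
  induction p with
  | nil => exact ⟨hu, .rfl⟩
  | @cons a b c hab p ih =>
    have hb : ↑b ∈ I := hcl a hu b b.2 hab
    obtain ⟨hc, hbc⟩ := ih hb
    exact ⟨hc, (show (G.induce I).Adj ⟨a, hu⟩ ⟨b, hb⟩ from hab).reachable.trans hbc⟩

lemma map_induceHomOfLE_injective (hIY : I ⊆ Y)
    (hcl : ∀ u ∈ I, ∀ v ∈ Y, G.Adj u v → v ∈ I) :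
    Injective (ConnectedComponent.map (G.induceHomOfLE hIY).toHom) := by
  intro c₁ c₂ h
  induction c₁ using ConnectedComponent.ind with | h x₁ =>
  induction c₂ using ConnectedComponent.ind with | h x₂ =>
  obtain ⟨_, hr⟩ := reachable_induce_of_closed hcl
    (ConnectedComponent.exact h :
      (G.induce Y).Reachable (Set.inclusion hIY x₁) (Set.inclusion hIY x₂))
    x₁.2
  exact ConnectedComponent.sound hr

lemma supp_map_induceHomOfLE (hIY : I ⊆ Y) (hcl : ∀ u ∈ I, ∀ v ∈ Y, G.Adj u v → v ∈ I)
    (c : (G.induce I).ConnectedComponent) :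
    (c.map (G.induceHomOfLE hIY).toHom).supp = Set.inclusion hIY '' c.supp := by
  induction c using ConnectedComponent.ind with | h x =>
  ext y
  simp only [ConnectedComponent.map_mk, ConnectedComponent.mem_supp_iff, Set.mem_image]
  constructor
  · intro hy
    obtain ⟨hyI, hr⟩ := reachable_induce_of_closed hcl (ConnectedComponent.exact hy).symm x.2
    exact ⟨⟨y, hyI⟩, ConnectedComponent.sound hr.symm, rfl⟩
  · rintro ⟨z, hz, rfl⟩
    exact ConnectedComponent.sound
      ((ConnectedComponent.exact hz).map (G.induceHomOfLE hIY).toHom)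

end ClosedSubset

section UnionSupp

variable {G : SimpleGraph V} {Y : Set V} (𝒞 : Set (G.induce Y).ConnectedComponent)

def unionSupp : Set V := {v | ∃ h : v ∈ Y, (G.induce Y).connectedComponentMk ⟨v, h⟩ ∈ 𝒞}

lemma unionSupp_subset : unionSupp 𝒞 ⊆ Y := fun _ hv => hv.1

lemma mem_unionSupp_of_adj {u v : V} (hu : u ∈ unionSupp 𝒞) (hv : v ∈ Y) (huv : G.Adj u v) :
    v ∈ unionSupp 𝒞 := by
  obtain ⟨hu, hC⟩ := hu
  refine ⟨hv, ?_⟩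
  rwa [← ConnectedComponent.sound (show (G.induce Y).Adj ⟨u, hu⟩ ⟨v, hv⟩ from huv).reachable]

noncomputable def unionSuppComponentEquiv :
    (G.induce (unionSupp 𝒞)).ConnectedComponent ≃ 𝒞 :=
  Equiv.ofBijective
    (fun c => ⟨c.map (G.induceHomOfLE (unionSupp_subset 𝒞)).toHom, by
      induction c using ConnectedComponent.ind with | h x => exact x.2.2⟩)
    ⟨fun _ _ h => map_induceHomOfLE_injective _ (fun _ hu _ => mem_unionSupp_of_adj 𝒞 hu)
      (congrArg Subtype.val h),
     fun ⟨C, hC⟩ => by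
      obtain ⟨y, rfl⟩ := C.exists_rep
      exact ⟨(G.induce (unionSupp 𝒞)).connectedComponentMk ⟨y, y.2, hC⟩, rfl⟩⟩

lemma coe_unionSuppComponentEquiv (c : (G.induce (unionSupp 𝒞)).ConnectedComponent) :
    (unionSuppComponentEquiv 𝒞 c : (G.induce Y).ConnectedComponent) =
      c.map (G.induceHomOfLE (unionSupp_subset 𝒞)).toHom :=
  rfl

lemma card_supp_unionSuppComponentEquiv (c : (G.induce (unionSupp 𝒞)).ConnectedComponent) :
    Nat.card (unionSuppComponentEquiv 𝒞 c : (G.induce Y).ConnectedComponent).supp =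
      Nat.card c.supp := by
  rw [coe_unionSuppComponentEquiv,
    supp_map_induceHomOfLE _ (fun _ hu _ => mem_unionSupp_of_adj 𝒞 hu),
    Nat.card_image_of_injective (Set.inclusion_injective _)]

end UnionSupp

theorem isStrictECOCCrown_unionSupp {G : SimpleGraph V} {l : ℕ} {S J : Set V}
    (hS : IsECOCSol G l S) (hJS : J ⊆ S) {𝒞 : Set (G.induce Sᶜ).ConnectedComponent}
    (h𝒞 : ∀ C ∈ 𝒞, ∀ u ∈ C.supp, ∀ v ∈ S, G.Adj ↑u v → v ∈ J)
    (f : J → 𝒞) (hf : Injective f)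
    (hfadj : ∀ x, ∃ u ∈ (f x : (G.induce Sᶜ).ConnectedComponent).supp, G.Adj ↑u ↑x)
    (hcard : Nat.card J < Nat.card 𝒞) :
    IsStrictECOCCrown G l (unionSupp 𝒞) J (unionSupp 𝒞 ∪ J)ᶜ := by
  set I := unionSupp 𝒞
  set e := unionSuppComponentEquiv 𝒞
  have hIS : Disjoint I S := Set.disjoint_left.mpr fun _ hv => hv.1
  have hsize : AllCompsSize G I l := fun c => by
    rw [← card_supp_unionSuppComponentEquiv 𝒞 c]
    exact hS _
  have hIR : ∀ u ∈ I, ∀ v ∈ (I ∪ J)ᶜ, ¬ G.Adj u v := by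
    intro u hu v hv huv
    by_cases hvS : v ∈ S
    · exact hv (Or.inr (h𝒞 _ hu.2 ⟨u, hu.1⟩ rfl v hvS huv))
    · exact hv (Or.inl (mem_unionSupp_of_adj 𝒞 hu hvS huv))
  have hMadj : ∀ x : J, ∃ u ∈ (e.symm (f x)).supp, G.Adj (u : V) x := by
    intro x
    obtain ⟨u, hu, hux⟩ := hfadj x
    have huI : ↑u ∈ I := ⟨u.2, hu ▸ (f x).2⟩
    refine ⟨⟨u, huI⟩, ?_, hux⟩
    rw [ConnectedComponent.mem_supp_iff, Equiv.eq_symm_apply]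
    exact Subtype.ext hu
  have hcardI : Nat.card J + 1 ≤ Nat.card (G.induce I).ConnectedComponent := by
    rw [Nat.card_congr e]
    exact hcard
  have hIne : I.Nonempty := by
    obtain ⟨⟨c⟩, -⟩ :=
      Nat.card_pos_iff.mp (by omega : 0 < Nat.card (G.induce I).ConnectedComponent)
    obtain ⟨x, -⟩ := c.exists_rep
    exact ⟨x, x.2⟩
  refine ⟨⟨Set.union_compl_self _, hIS.mono_right hJS,
    disjoint_compl_right.mono_left Set.subset_union_left,
    disjoint_compl_right.mono_left Set.subset_union_right, hsize,
    hIR, e.symm ∘ f, e.symm.injective.comp hf, hMadj⟩, hIne, hcardI⟩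

lemma card_connectedComponent_mul_eq_card {W : Type*} [Finite W] (H : SimpleGraph W) {l : ℕ}
    (h : ∀ c : H.ConnectedComponent, Nat.card c.supp = l) :
    Nat.card H.ConnectedComponent * l = Nat.card W := by
  have := Fintype.ofFinite W
  have := Fintype.ofFinite H.ConnectedComponent
  calc Nat.card H.ConnectedComponent * l = ∑ c : H.ConnectedComponent, Nat.card c.supp := by
        simp [h, mul_comm]
    _ = Nat.card (Σ c : H.ConnectedComponent, c.supp) := Nat.card_sigma.symm
    _ = Nat.card W := Nat.card_congr (Equiv.sigmaFiberEquiv H.connectedComponentMk)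

lemma IsECOCSol.card_lt_card_connectedComponent [Finite V] {G : SimpleGraph V} {l k : ℕ}
    {S : Set V} (hS : IsECOCSol G l S) (hl : 1 ≤ l) (hn : (l + 1) * k + l ≤ Nat.card V)
    (hSk : Nat.card S ≤ k) :
    Nat.card S < Nat.card (G.induce Sᶜ).ConnectedComponent := by
  have hcount := card_connectedComponent_mul_eq_card _ hS
  have hcompl : Nat.card S + Nat.card ↥Sᶜ = Nat.card V := by
    rw [Nat.card_coe_set_eq, Nat.card_coe_set_eq, Set.ncard_add_ncard_compl]
  have : (k + 1) * l ≤ Nat.card (G.induce Sᶜ).ConnectedComponent * l := by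
    nlinarith
  exact lt_of_lt_of_le (by omega) (Nat.le_of_mul_le_mul_right this hl)

theorem IsECOCSol.exists_isStrictECOCCrown_of_card_lt [Finite V] {G : SimpleGraph V} {l : ℕ}
    {S : Set V} (hS : IsECOCSol G l S)
    (hlt : Nat.card S < Nat.card (G.induce Sᶜ).ConnectedComponent) :
    ∃ I J, IsStrictECOCCrown G l I J (I ∪ J)ᶜ := by
  let r (C : (G.induce Sᶜ).ConnectedComponent) (v : V) : Prop :=
    v ∈ S ∧ ∃ u ∈ C.supp, G.Adj u v
  have hS_univ : confinedTo r S = Set.univ := Set.eq_univ_of_forall fun _ _ hv => hv.1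
  obtain ⟨J, hJS, hJ, f, hf, hfr⟩ := exists_surplus_matching (r := r) (S := S)
    (by rwa [hS_univ, Set.ncard_univ])
  exact ⟨_, J, isStrictECOCCrown_unionSupp (𝒞 := confinedTo r J) hS hJS
    (fun C hC u hu v hv huv => hC v ⟨hv, u, hu, huv⟩) f hf (fun x => (hfr x).2) hJ⟩

theorem stmt18_general [Fintype V] (G : SimpleGraph V) (l k : ℕ) (hl : 1 ≤ l)
    (hn : (l + 1) * k + l ≤ Fintype.card V)
    (hsol : ∃ S : Set V, IsECOCSol G l S ∧ Nat.card S ≤ k) :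
    ∃ I J R : Set V, IsStrictECOCCrown G l I J R ∧
      ¬ ∃ I' J' : Set V, I' ⊂ I ∧ J' ⊆ J ∧
        IsStrictECOCCrown G l I' J' (I' ∪ J')ᶜ := by
  obtain ⟨S, hS, hSk⟩ := hsol
  obtain ⟨I, hI⟩ := exists_minimal_of_wellFoundedLT
    (fun I => ∃ J, IsStrictECOCCrown G l I J (I ∪ J)ᶜ)
    (hS.exists_isStrictECOCCrown_of_card_lt
      (hS.card_lt_card_connectedComponent hl (by rwa [Nat.card_eq_fintype_card]) hSk))
  obtain ⟨J, hIJ⟩ := hI.prop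
  exact ⟨I, J, _, hIJ, fun ⟨I', J', hI', _, h'⟩ => hI.not_prop_of_lt hI' ⟨J', h'⟩⟩

theorem stmt18 [Fintype V] (G : SimpleGraph V) (l k : ℕ) (hl : 1 ≤ l)
    (hn : (l + 1) * k + l ≤ Fintype.card V)
    (hcomp : ∀ c : G.ConnectedComponent, l < Nat.card c.supp)
    (hsol : ∃ S : Set V, IsECOCSol G l S ∧ Nat.card S ≤ k) :
    ∃ I J R : Set V, IsStrictECOCCrown G l I J R ∧
      ¬ ∃ I' J' : Set V, I' ⊂ I ∧ J' ⊆ J ∧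
        IsStrictECOCCrown G l I' J' (I' ∪ J')ᶜ :=
  stmt18_general G l k hl hn hsol
end
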